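/- arXiv:2504.16687 — 3 statements merged into one kernel-verified Lean document; each statement's English description precedes it below -/
import Mathlib

section
/- Improved Hölder inequality on the torus: let d ≥ 2, p ∈ [1,∞], and let a, f : 𝕋^d → ℝ be smooth. Then for any σ ∈ ℕ, | ‖a·f(σ·)‖_{L^p(𝕋^d)} − ‖a‖_{L^p(𝕋^d)} ‖f‖_{L^p(𝕋^d)} | ≲ σ^{−1/p} ‖a‖_{C^1} ‖f‖_{L^p}, with implicit constant independent of σ. -/
open MeasureTheory
open scoped BigOperators NNReal ENNReal

noncomputable section

/-- `ℤ^d`-periodicity of a scalar function on `ℝ^d` (so it descends to `𝕋^d = ℝ^d/ℤ^d`). -/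
def ZPer (d : ℕ) (f : (Fin d → ℝ) → ℝ) : Prop :=
  ∀ (x : Fin d → ℝ) (n : Fin d → ℤ), f (x + fun i => (n i : ℝ)) = f x

/-- The `C^1` norm `‖a‖_{C^0} + ‖∇a‖_{C^0}` of a function on `𝕋^d`, valued in `ℝ≥0∞`. -/
noncomputable def c1Norm (d : ℕ) (a : (Fin d → ℝ) → ℝ) : ℝ≥0∞ :=
  (⨆ x : Fin d → ℝ, (‖a x‖₊ : ℝ≥0∞)) + ⨆ x : Fin d → ℝ, (‖fderiv ℝ a x‖₊ : ℝ≥0∞)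

/-- The `L^p` norm over the fundamental domain `[0,1]^d` of the torus. -/
noncomputable def lpNorm (d : ℕ) (p : ℝ≥0∞) (f : (Fin d → ℝ) → ℝ) : ℝ≥0∞ :=
  eLpNorm f p (volume.restrict (Set.Icc (0 : Fin d → ℝ) 1))

section Lemmas
open Set

/-- every point is a periodic translate of a point of `[0,1]^d` -/
lemma exists_rep {d : ℕ} (x : Fin d → ℝ) :
    ∃ y ∈ Icc (0 : Fin d → ℝ) 1, ∃ n : Fin d → ℤ, x = y + fun i => (n i : ℝ) := by
  refine ⟨fun i => Int.fract (x i), ?_, fun i => ⌊x i⌋, ?_⟩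
  · constructor
    · intro i; exact (Int.fract_nonneg _)
    · intro i; exact (Int.fract_lt_one _).le
  · funext i
    simp only [Pi.add_apply, Int.fract]
    ring

/-- a continuous periodic function attains its max norm on `[0,1]^d` -/
lemma exists_max {d : ℕ} {E : Type*} [NormedAddCommGroup E] (g : (Fin d → ℝ) → E)
    (hg : Continuous g)
    (hper : ∀ (x : Fin d → ℝ) (n : Fin d → ℤ), g (x + fun i => (n i : ℝ)) = g x) :
    ∃ x0 ∈ Icc (0 : Fin d → ℝ) 1, ∀ x, ‖g x‖ ≤ ‖g x0‖ := by
  have hne : (Icc (0 : Fin d → ℝ) 1).Nonempty := ⟨0, le_refl _, fun i => zero_le_one⟩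
  obtain ⟨x0, hx0, hmax⟩ := isCompact_Icc.exists_isMaxOn hne
    ((hg.norm).continuousOn : ContinuousOn (fun x => ‖g x‖) (Icc 0 1))
  refine ⟨x0, hx0, fun x => ?_⟩
  obtain ⟨y, hy, n, rfl⟩ := exists_rep x
  rw [hper y n]
  exact hmax hy

/-- the derivative of a periodic function is periodic -/
lemma fderiv_zper {d : ℕ} {a : (Fin d → ℝ) → ℝ} (ha : ContDiff ℝ (⊤ : ℕ∞) a) (hper : ZPer d a) :
    ∀ (x : Fin d → ℝ) (n : Fin d → ℤ),
      fderiv ℝ a (x + fun i => (n i : ℝ)) = fderiv ℝ a x := by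
  intro x n
  set c : Fin d → ℝ := fun i => (n i : ℝ) with hc
  have h1 : HasFDerivAt (fun y => a (y + c)) (fderiv ℝ a (x + c)) x := by
    have h2 := ((ha.differentiable (by simp) (x + c)).hasFDerivAt).comp x
      ((hasFDerivAt_id x).add_const c)
    exact h2
  have h3 : (fun y => a (y + c)) = a := funext fun y => hper y n
  rw [h3] at h1
  exact (h1.fderiv).symm


lemma setIntegral_translate {d : ℕ} (h : (Fin d → ℝ) → ℝ) (v : Fin d → ℝ)
    {T B : Set (Fin d → ℝ)} (hT : MeasurableSet T) (hB : MeasurableSet B)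
    (hTB : ∀ x, v + x ∈ T ↔ x ∈ B) :
    ∫ x in T, h x = ∫ x in B, h (v + x) := by
  rw [← integral_indicator hT, ← integral_indicator hB]
  have := (integral_add_left_eq_self (μ := (volume : Measure (Fin d → ℝ)))
    (T.indicator h) v).symm
  rw [this]
  congr 1
  funext x
  by_cases hx : x ∈ B
  · rw [Set.indicator_of_mem hx, Set.indicator_of_mem ((hTB x).mpr hx)]
  · rw [Set.indicator_of_notMem hx, Set.indicator_of_notMem (fun hc => hx ((hTB x).mp hc))]

/-- decomposition of the big box into unit boxes -/
lemma decomp {d σ : ℕ} (hσ : 0 < σ) (h : (Fin d → ℝ) → ℝ) (hh : Continuous h) :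
    ∫ y in Set.pi Set.univ (fun _ : Fin d => Ico (0:ℝ) (σ:ℝ)), h y
      = ∑ j : Fin d → Fin σ, ∫ y in Set.pi Set.univ (fun _ : Fin d => Ico (0:ℝ) 1),
          h ((fun i => ((j i : ℕ) : ℝ)) + y) := by
  classical
  set s : (Fin d → Fin σ) → Set (Fin d → ℝ) :=
    fun j => Set.pi Set.univ (fun i => Ico ((j i : ℕ) : ℝ) ((j i : ℕ) + 1)) with hs
  have hmeas : ∀ j, MeasurableSet (s j) := fun j =>
    MeasurableSet.univ_pi (fun i => measurableSet_Ico)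
  have hfloor : ∀ (j : Fin d → Fin σ) (x : Fin d → ℝ), x ∈ s j → ∀ i, ⌊x i⌋ = (j i : ℕ) := by
    intro j x hx i
    have h1 := hx i (Set.mem_univ i)
    rw [Set.mem_Ico] at h1
    rw [Int.floor_eq_iff]
    exact_mod_cast h1
  have hunion : (⋃ j ∈ (Finset.univ : Finset (Fin d → Fin σ)), s j)
      = Set.pi Set.univ (fun _ : Fin d => Ico (0:ℝ) (σ:ℝ)) := by
    ext x
    simp only [Set.mem_iUnion, Set.mem_pi, Set.mem_univ, forall_true_left, Finset.mem_univ,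
      iUnion_true, mem_Ico, hs]
    constructor
    · rintro ⟨j, hj⟩ i
      obtain ⟨h1, h2⟩ := hj i
      constructor
      · exact le_trans (by positivity) h1
      · calc x i < (j i : ℕ) + 1 := h2
          _ ≤ (σ : ℝ) := by exact_mod_cast (j i).2
    · intro hx
      have hlt : ∀ i, ⌊x i⌋.toNat < σ := by
        intro i
        have h2 : ⌊x i⌋ < (σ : ℤ) := Int.floor_lt.mpr (by exact_mod_cast (hx i).2)
        have h0 : (0:ℤ) ≤ ⌊x i⌋ := Int.floor_nonneg.mpr (hx i).1
        omega
      refine ⟨fun i => ⟨⌊x i⌋.toNat, hlt i⟩, fun i => ?_⟩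
      have h0 : (0:ℤ) ≤ ⌊x i⌋ := Int.floor_nonneg.mpr (hx i).1
      have hcast : ((⌊x i⌋.toNat : ℕ) : ℝ) = (⌊x i⌋ : ℝ) := by exact_mod_cast Int.toNat_of_nonneg h0
      constructor
      · rw [hcast]; exact Int.floor_le _
      · rw [hcast]; exact Int.lt_floor_add_one _
  have hdisj : ((Finset.univ : Finset (Fin d → Fin σ)) : Set (Fin d → Fin σ)).Pairwise
      (Function.onFun Disjoint s) := by
    intro j _ j' _ hjj'
    rw [Function.onFun, Set.disjoint_left]
    intro x hx hx'
    apply hjj'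
    funext i
    have := hfloor j x hx i
    have h2 := hfloor j' x hx' i
    apply Fin.ext
    have : ((j i : ℕ) : ℤ) = ((j' i : ℕ) : ℤ) := by rw [← this, ← h2]
    exact_mod_cast this
  have hint : ∀ j ∈ (Finset.univ : Finset (Fin d → Fin σ)), IntegrableOn h (s j) volume := by
    intro j _
    have hsub : s j ⊆ Icc (fun i => ((j i : ℕ) : ℝ)) (fun i => ((j i : ℕ) : ℝ) + 1) := by
      rw [← Set.pi_univ_Icc]
      exact Set.pi_mono (fun i _ => Set.Ico_subset_Icc_self)
    exact (hh.continuousOn.integrableOn_compact isCompact_Icc).mono_set hsub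
  rw [← hunion, integral_biUnion_finset _ (fun j _ => hmeas j) hdisj hint]
  apply Finset.sum_congr rfl
  intro j _
  apply setIntegral_translate h _ (hmeas j) (MeasurableSet.univ_pi (fun i => measurableSet_Ico))
  intro x
  simp only [hs, Set.mem_pi, Set.mem_univ, forall_true_left, mem_Ico, Pi.add_apply]
  constructor
  · intro hx i
    have := hx i
    constructor <;> linarith [this.1, this.2]
  · intro hx i
    have := hx i
    constructor <;> linarith [this.1, this.2]


lemma volume_Icc01 {d : ℕ} : (volume : Measure (Fin d → ℝ)) (Icc 0 1) = 1 := by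
  rw [Real.volume_Icc_pi]
  simp

lemma restrict_Icc_eq_Ico {d : ℕ} :
    (volume : Measure (Fin d → ℝ)).restrict (Icc 0 1)
      = volume.restrict (Set.pi Set.univ (fun _ : Fin d => Ico (0:ℝ) 1)) := by
  apply Measure.restrict_congr_set
  have hsub : Set.pi Set.univ (fun _ : Fin d => Ico (0:ℝ) 1) ⊆ Icc 0 1 := by
    rw [← Set.pi_univ_Icc]
    exact Set.pi_mono (fun i _ => Set.Ico_subset_Icc_self)
  have hd : (volume : Measure (Fin d → ℝ)) (Icc 0 1 \ Set.pi Set.univ (fun _ : Fin d => Ico (0:ℝ) 1)) = 0 := by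
    have h1 : (volume : Measure (Fin d → ℝ)) (Set.pi Set.univ (fun _ : Fin d => Ico (0:ℝ) 1)) = 1 := by
      rw [Real.volume_pi_Ico]; simp
    rw [measure_diff hsub (MeasurableSet.univ_pi (fun i => measurableSet_Ico)).nullMeasurableSet
      (by rw [h1]; exact ENNReal.one_ne_top), h1, volume_Icc01, tsub_self]
  exact (MeasureTheory.ae_eq_set.mpr ⟨hd, by simp [Set.diff_eq_empty.mpr hsub]⟩)

/-- unfolding the integral over `[0,1]^d` of a function precomposed with nothing:
substitute `x = (j + y)/σ`. -/
lemma unfold {d σ : ℕ} (hσ : 0 < σ) (h : (Fin d → ℝ) → ℝ) (hh : Continuous h) :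
    ∫ x in Icc (0 : Fin d → ℝ) 1, h x
      = ((σ:ℝ)^d)⁻¹ * ∑ j : Fin d → Fin σ, ∫ y in Icc (0 : Fin d → ℝ) 1,
          h ((σ:ℝ)⁻¹ • ((fun i => ((j i : ℕ) : ℝ)) + y)) := by
  have hσR : (0:ℝ) < (σ:ℝ) := by exact_mod_cast hσ
  set Bσ : Set (Fin d → ℝ) := Set.pi Set.univ (fun _ : Fin d => Ico (0:ℝ) (σ:ℝ)) with hBσ
  set B1 : Set (Fin d → ℝ) := Set.pi Set.univ (fun _ : Fin d => Ico (0:ℝ) 1) with hB1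
  have hmBσ : MeasurableSet Bσ := MeasurableSet.univ_pi (fun i => measurableSet_Ico)
  have hmB1 : MeasurableSet B1 := MeasurableSet.univ_pi (fun i => measurableSet_Ico)
  set H : (Fin d → ℝ) → ℝ := Bσ.indicator (fun y => h ((σ:ℝ)⁻¹ • y)) with hH
  have key : ∀ x, H ((σ:ℝ) • x) = B1.indicator h x := by
    intro x
    have hmem : ((σ:ℝ) • x ∈ Bσ) ↔ x ∈ B1 := by
      simp only [hBσ, hB1, Set.mem_pi, Set.mem_univ, forall_true_left, mem_Ico, Pi.smul_apply,
        smul_eq_mul]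
      constructor
      · intro hx i
        obtain ⟨h1, h2⟩ := hx i
        constructor
        · exact nonneg_of_mul_nonneg_right h1 hσR
        · have h2' : (σ:ℝ) * x i < (σ:ℝ) * 1 := by simpa using h2
          have := (mul_lt_mul_iff_right₀ hσR).mp h2'
          linarith
      · intro hx i
        obtain ⟨h1, h2⟩ := hx i
        constructor
        · positivity
        · have := (mul_lt_mul_iff_right₀ hσR).mpr h2
          simpa using this
    by_cases hx : x ∈ B1
    · rw [Set.indicator_of_mem hx, hH, Set.indicator_of_mem (hmem.mpr hx)]
      rw [inv_smul_smul₀ (ne_of_gt hσR)]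
    · rw [Set.indicator_of_notMem hx, hH, Set.indicator_of_notMem (fun hc => hx (hmem.mp hc))]
  have hfr : Module.finrank ℝ (Fin d → ℝ) = d := by
    rw [Module.finrank_pi]; exact Fintype.card_fin d
  have step1 : ∫ x, H ((σ:ℝ) • x) = |((σ:ℝ)^d)⁻¹| • ∫ x, H x := by
    have := MeasureTheory.Measure.integral_comp_smul (volume : Measure (Fin d → ℝ)) H (σ:ℝ)
    rwa [hfr] at this
  have step2 : ∫ x, H ((σ:ℝ) • x) = ∫ x in Icc (0 : Fin d → ℝ) 1, h x := by
    rw [restrict_Icc_eq_Ico, ← integral_indicator hmB1]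
    exact integral_congr_ae (Filter.Eventually.of_forall key)
  have step3 : ∫ x, H x = ∫ y in Bσ, h ((σ:ℝ)⁻¹ • y) := integral_indicator hmBσ
  have step4 := decomp (d := d) hσ (fun y => h ((σ:ℝ)⁻¹ • y))
    (hh.comp (continuous_const_smul _))
  have habs : |((σ:ℝ)^d)⁻¹| = ((σ:ℝ)^d)⁻¹ := abs_of_pos (by positivity)
  calc ∫ x in Icc (0 : Fin d → ℝ) 1, h x
      = |((σ:ℝ)^d)⁻¹| • ∫ x, H x := by rw [← step1, step2]
    _ = ((σ:ℝ)^d)⁻¹ * ∑ j : Fin d → Fin σ, ∫ y in Icc (0 : Fin d → ℝ) 1,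
          h ((σ:ℝ)⁻¹ • ((fun i => ((j i : ℕ) : ℝ)) + y)) := by
        rw [habs, step3, step4, smul_eq_mul]
        congr 1
        apply Finset.sum_congr rfl
        intro j _
        rw [restrict_Icc_eq_Ico]

/-- **Key estimate**: oscillation version of the improved Hölder inequality at the level of
integrals. -/
lemma key_est {d σ : ℕ} (hσ : 0 < σ) (A G : (Fin d → ℝ) → ℝ)
    (hA : Continuous A) (hG : Continuous G)
    (hGper : ∀ (x : Fin d → ℝ) (n : Fin d → ℤ), G (x + fun i => (n i : ℝ)) = G x)
    (hG0 : ∀ x, 0 ≤ G x) (L : ℝ) (hL : 0 ≤ L)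
    (hlip : ∀ u v, |A u - A v| ≤ L * ‖u - v‖) :
    |(∫ x in Icc (0 : Fin d → ℝ) 1, A x * G ((σ:ℝ) • x))
        - (∫ x in Icc (0 : Fin d → ℝ) 1, A x) * ∫ x in Icc (0 : Fin d → ℝ) 1, G x|
      ≤ 2 * L * (σ:ℝ)⁻¹ * ∫ x in Icc (0 : Fin d → ℝ) 1, G x := by
  have hσR : (0:ℝ) < (σ:ℝ) := by exact_mod_cast hσ
  set I : Set (Fin d → ℝ) := Icc 0 1 with hI
  set m : ℝ := ∫ x in I, G x with hm
  have hm0 : 0 ≤ m := setIntegral_nonneg measurableSet_Icc (fun x _ => hG0 x)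
  set ι : (Fin d → Fin σ) → (Fin d → ℝ) := fun j i => ((j i : ℕ) : ℝ) with hι
  -- integrability facts
  have hGint : IntegrableOn G I volume := hG.continuousOn.integrableOn_compact isCompact_Icc
  have hAj : ∀ j : Fin d → Fin σ, Continuous (fun y => A ((σ:ℝ)⁻¹ • (ι j + y))) := by
    intro j
    exact hA.comp ((continuous_const_smul _).comp (continuous_const.add continuous_id))
  -- Step 1 : unfold both integrals
  have E1 : (∫ x in I, A x * G ((σ:ℝ) • x))
      = ((σ:ℝ)^d)⁻¹ * ∑ j : Fin d → Fin σ, ∫ y in I,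
          A ((σ:ℝ)⁻¹ • (ι j + y)) * G y := by
    rw [unfold hσ (fun x => A x * G ((σ:ℝ) • x)) (by fun_prop)]
    congr 1
    apply Finset.sum_congr rfl
    intro j _
    apply setIntegral_congr_fun measurableSet_Icc
    intro y _
    simp only [smul_inv_smul₀ (ne_of_gt hσR)]
    congr 1
    have heq : ((fun i => ((j i : ℕ) : ℝ)) + y) = y + fun i => (((j i : ℕ) : ℤ) : ℝ) := by
      funext i; simp only [Pi.add_apply, Int.cast_natCast]; ring
    rw [heq, hGper y (fun i => ((j i : ℕ) : ℤ))]
  have E2 : (∫ x in I, A x)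
      = ((σ:ℝ)^d)⁻¹ * ∑ j : Fin d → Fin σ, ∫ y in I, A ((σ:ℝ)⁻¹ • (ι j + y)) := by
    exact unfold hσ A hA
  -- Step 2 : per-cube estimates
  have hosc : ∀ (j : Fin d → Fin σ) (y : Fin d → ℝ), y ∈ I →
      |A ((σ:ℝ)⁻¹ • (ι j + y)) - A ((σ:ℝ)⁻¹ • ι j)| ≤ L / σ := by
    intro j y hy
    have h1 := hlip ((σ:ℝ)⁻¹ • (ι j + y)) ((σ:ℝ)⁻¹ • ι j)
    have h2 : (σ:ℝ)⁻¹ • (ι j + y) - (σ:ℝ)⁻¹ • ι j = (σ:ℝ)⁻¹ • y := by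
      rw [smul_add]; abel
    rw [h2] at h1
    have h3 : ‖(σ:ℝ)⁻¹ • y‖ ≤ (σ:ℝ)⁻¹ := by
      rw [norm_smul]
      have hy1 : ‖y‖ ≤ 1 := by
        apply pi_norm_le_iff_of_nonneg zero_le_one |>.mpr
        intro i
        rw [Real.norm_eq_abs, abs_le]
        have k1 : (0:ℝ) ≤ y i := hy.1 i
        have k2 : y i ≤ 1 := hy.2 i
        exact ⟨by linarith, by linarith⟩
      have : ‖(σ:ℝ)⁻¹‖ = (σ:ℝ)⁻¹ := by
        rw [Real.norm_eq_abs, abs_of_pos (by positivity)]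
      rw [this]
      calc (σ:ℝ)⁻¹ * ‖y‖ ≤ (σ:ℝ)⁻¹ * 1 := by
            apply mul_le_mul_of_nonneg_left hy1 (by positivity)
        _ = (σ:ℝ)⁻¹ := mul_one _
    calc |A ((σ:ℝ)⁻¹ • (ι j + y)) - A ((σ:ℝ)⁻¹ • ι j)| ≤ L * ‖(σ:ℝ)⁻¹ • y‖ := h1
      _ ≤ L * (σ:ℝ)⁻¹ := mul_le_mul_of_nonneg_left h3 hL
      _ = L / σ := by rw [div_eq_mul_inv]
  have per_cube : ∀ j : Fin d → Fin σ,
      |(∫ y in I, A ((σ:ℝ)⁻¹ • (ι j + y)) * G y)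
        - (∫ y in I, A ((σ:ℝ)⁻¹ • (ι j + y))) * m| ≤ 2 * (L / σ) * m := by
    intro j
    set c : ℝ := A ((σ:ℝ)⁻¹ • ι j) with hc
    have hAjI : IntegrableOn (fun y => A ((σ:ℝ)⁻¹ • (ι j + y))) I volume :=
      (hAj j).continuousOn.integrableOn_compact isCompact_Icc
    have hAjGI : IntegrableOn (fun y => A ((σ:ℝ)⁻¹ • (ι j + y)) * G y) I volume :=
      ((hAj j).mul hG).continuousOn.integrableOn_compact isCompact_Icc
    have hvol : volume.real I = 1 := by rw [Measure.real, volume_Icc01]; simp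
    -- first: |T - c*m| ≤ (L/σ) * m
    have hTc : |(∫ y in I, A ((σ:ℝ)⁻¹ • (ι j + y)) * G y) - c * m| ≤ (L / σ) * m := by
      have heq : (∫ y in I, A ((σ:ℝ)⁻¹ • (ι j + y)) * G y) - c * m
          = ∫ y in I, (A ((σ:ℝ)⁻¹ • (ι j + y)) - c) * G y := by
        rw [hm, ← integral_const_mul, ← integral_sub hAjGI (hGint.const_mul c)]
        congr 1; funext y; ring
      rw [heq]
      have h1 : |∫ y in I, (A ((σ:ℝ)⁻¹ • (ι j + y)) - c) * G y|
          ≤ ∫ y in I, |(A ((σ:ℝ)⁻¹ • (ι j + y)) - c) * G y| := by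
        have h1' := norm_integral_le_integral_norm
          (μ := volume.restrict I) (fun y => (A ((σ:ℝ)⁻¹ • (ι j + y)) - c) * G y)
        simp only [Real.norm_eq_abs] at h1'
        exact h1'
      apply h1.trans
      have h2 : ∫ y in I, |(A ((σ:ℝ)⁻¹ • (ι j + y)) - c) * G y| ≤ ∫ y in I, (L / σ) * G y := by
        apply setIntegral_mono_on
        · exact ((((hAj j).sub continuous_const).mul
            hG).continuousOn.integrableOn_compact isCompact_Icc).abs
        · exact hGint.const_mul _
        · exact measurableSet_Icc
        · intro y hy
          rw [abs_mul, abs_of_nonneg (hG0 y)]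
          exact mul_le_mul_of_nonneg_right (hosc j y hy) (hG0 y)
      apply h2.trans
      rw [integral_const_mul]
    -- second: |S - c| ≤ L/σ
    have hSc : |(∫ y in I, A ((σ:ℝ)⁻¹ • (ι j + y))) - c| ≤ L / σ := by
      have heq : (∫ y in I, A ((σ:ℝ)⁻¹ • (ι j + y))) - c
          = ∫ y in I, (A ((σ:ℝ)⁻¹ • (ι j + y)) - c) := by
        rw [integral_sub hAjI (integrableOn_const (by rw [volume_Icc01]; exact ENNReal.one_ne_top))]
        rw [setIntegral_const, hvol, one_smul]
      rw [heq]
      have h1 : |∫ y in I, (A ((σ:ℝ)⁻¹ • (ι j + y)) - c)|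
          ≤ ∫ y in I, |A ((σ:ℝ)⁻¹ • (ι j + y)) - c| := by
        have h1' := norm_integral_le_integral_norm
          (μ := volume.restrict I) (fun y => A ((σ:ℝ)⁻¹ • (ι j + y)) - c)
        simp only [Real.norm_eq_abs] at h1'
        exact h1'
      apply h1.trans
      have h2 : ∫ y in I, |A ((σ:ℝ)⁻¹ • (ι j + y)) - c| ≤ ∫ y in I, (L / σ) := by
        apply setIntegral_mono_on
        · exact (hAjI.sub (integrableOn_const (by rw [volume_Icc01]; exact ENNReal.one_ne_top))).abs
        · exact integrableOn_const (by rw [volume_Icc01]; exact ENNReal.one_ne_top)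
        · exact measurableSet_Icc
        · exact hosc j
      apply h2.trans
      rw [setIntegral_const, hvol, one_smul]
    calc |(∫ y in I, A ((σ:ℝ)⁻¹ • (ι j + y)) * G y)
        - (∫ y in I, A ((σ:ℝ)⁻¹ • (ι j + y))) * m|
        = |((∫ y in I, A ((σ:ℝ)⁻¹ • (ι j + y)) * G y) - c * m)
            + (c - (∫ y in I, A ((σ:ℝ)⁻¹ • (ι j + y)))) * m| := by congr 1; ring
      _ ≤ |(∫ y in I, A ((σ:ℝ)⁻¹ • (ι j + y)) * G y) - c * m|
            + |(c - (∫ y in I, A ((σ:ℝ)⁻¹ • (ι j + y)))) * m| := abs_add_le _ _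
      _ ≤ (L / σ) * m + (L / σ) * m := by
          apply add_le_add hTc
          rw [abs_mul, abs_of_nonneg hm0, abs_sub_comm]
          exact mul_le_mul_of_nonneg_right hSc hm0
      _ = 2 * (L / σ) * m := by ring
  -- Step 3: combine
  rw [E1, E2]
  have hcard : (Fintype.card (Fin d → Fin σ) : ℝ) = (σ:ℝ)^d := by
    rw [Fintype.card_fun]
    simp
  calc |((σ:ℝ)^d)⁻¹ * (∑ j : Fin d → Fin σ, ∫ y in I, A ((σ:ℝ)⁻¹ • (ι j + y)) * G y)
      - (((σ:ℝ)^d)⁻¹ * ∑ j : Fin d → Fin σ, ∫ y in I, A ((σ:ℝ)⁻¹ • (ι j + y))) * m|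
      = ((σ:ℝ)^d)⁻¹ * |∑ j : Fin d → Fin σ,
          ((∫ y in I, A ((σ:ℝ)⁻¹ • (ι j + y)) * G y)
            - (∫ y in I, A ((σ:ℝ)⁻¹ • (ι j + y))) * m)| := by
        have hre : ((σ:ℝ)^d)⁻¹ * (∑ j : Fin d → Fin σ, ∫ y in I, A ((σ:ℝ)⁻¹ • (ι j + y)) * G y)
            - (((σ:ℝ)^d)⁻¹ * ∑ j : Fin d → Fin σ, ∫ y in I, A ((σ:ℝ)⁻¹ • (ι j + y))) * m
            = ((σ:ℝ)^d)⁻¹ * ∑ j : Fin d → Fin σ,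
              ((∫ y in I, A ((σ:ℝ)⁻¹ • (ι j + y)) * G y)
                - (∫ y in I, A ((σ:ℝ)⁻¹ • (ι j + y))) * m) := by
          rw [Finset.sum_sub_distrib, ← Finset.sum_mul]
          ring
        rw [hre, abs_mul, abs_of_nonneg (by positivity : (0:ℝ) ≤ ((σ:ℝ)^d)⁻¹)]
    _ ≤ ((σ:ℝ)^d)⁻¹ * ∑ j : Fin d → Fin σ, |(∫ y in I, A ((σ:ℝ)⁻¹ • (ι j + y)) * G y)
            - (∫ y in I, A ((σ:ℝ)⁻¹ • (ι j + y))) * m| := by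
        apply mul_le_mul_of_nonneg_left (Finset.abs_sum_le_sum_abs _ _) (by positivity)
    _ ≤ ((σ:ℝ)^d)⁻¹ * ∑ j : Fin d → Fin σ, 2 * (L / σ) * m := by
        apply mul_le_mul_of_nonneg_left (Finset.sum_le_sum (fun j _ => per_cube j)) (by positivity)
    _ = 2 * L * (σ:ℝ)⁻¹ * m := by
        rw [Finset.sum_const, Finset.card_univ, nsmul_eq_mul, hcard]
        field_simp


/-- Lipschitz estimate for `t ↦ t^q` on `[0,M]`. -/
lemma rpow_lip {q M s t : ℝ} (hq : 1 ≤ q) (hs : s ∈ Icc (0:ℝ) M) (ht : t ∈ Icc (0:ℝ) M) :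
    |s ^ q - t ^ q| ≤ q * M ^ (q - 1) * |s - t| := by
  have h0 : ∀ x ∈ Icc (0:ℝ) M, HasDerivWithinAt (fun x : ℝ => x ^ q)
      (q * x ^ (q - 1)) (Icc 0 M) x := fun x _ =>
    (Real.hasDerivAt_rpow_const (Or.inr hq)).hasDerivWithinAt
  have hb : ∀ x ∈ Icc (0:ℝ) M, ‖q * x ^ (q - 1)‖ ≤ q * M ^ (q - 1) := by
    intro x hx
    rw [Real.norm_eq_abs, abs_mul, abs_of_nonneg (by linarith : (0:ℝ) ≤ q),
      abs_of_nonneg (Real.rpow_nonneg hx.1 _)]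
    exact mul_le_mul_of_nonneg_left
      (Real.rpow_le_rpow hx.1 hx.2 (by linarith)) (by linarith)
  have := Convex.norm_image_sub_le_of_norm_hasDerivWithin_le h0 hb (convex_Icc 0 M) ht hs
  simpa [Real.norm_eq_abs] using this

/-- `(a^q + b^q)^(q⁻¹) ≤ a + b` for nonneg reals, `q ≥ 1`. -/
lemma rpow_add_le {q a b : ℝ} (hq : 1 ≤ q) (ha : 0 ≤ a) (hb : 0 ≤ b) :
    (a ^ q + b ^ q) ^ q⁻¹ ≤ a + b := by
  have := NNReal.rpow_add_rpow_le_add (p := q) a.toNNReal b.toNNReal hq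
  rw [← NNReal.coe_le_coe] at this
  push_cast at this
  rw [Real.coe_toNNReal a ha, Real.coe_toNNReal b hb] at this
  simpa [one_div] using this

/-- `|x - z| ≤ |x^q - z^q|^(q⁻¹)` for nonneg reals, `q ≥ 1`. -/
lemma abs_sub_le_rpow {q x z : ℝ} (hq : 1 ≤ q) (hx : 0 ≤ x) (hz : 0 ≤ z) :
    |x - z| ≤ |x ^ q - z ^ q| ^ q⁻¹ := by
  have hq0 : q ≠ 0 := by linarith
  -- wlog z ≤ x
  have main : ∀ x z : ℝ, 0 ≤ x → 0 ≤ z → z ≤ x → x - z ≤ |x ^ q - z ^ q| ^ q⁻¹ := by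
    intro x z hx hz hzx
    have hxz : (0:ℝ) ≤ x - z := by linarith
    have hnn : (0:ℝ) ≤ (x - z) ^ q + z ^ q :=
      add_nonneg (Real.rpow_nonneg hxz _) (Real.rpow_nonneg hz _)
    have hmono : z ^ q ≤ x ^ q := Real.rpow_le_rpow hz hzx (by linarith)
    have h1 : (x - z) ^ q + z ^ q ≤ x ^ q := by
      have h2 : ((x - z) ^ q + z ^ q) ^ q⁻¹ ≤ x := by
        have := rpow_add_le hq (by linarith : (0:ℝ) ≤ x - z) hz
        simpa using this
      calc (x - z) ^ q + z ^ q
          = (((x - z) ^ q + z ^ q) ^ q⁻¹) ^ q := by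
            rw [Real.rpow_inv_rpow hnn hq0]
        _ ≤ x ^ q := Real.rpow_le_rpow (Real.rpow_nonneg hnn _) h2 (by linarith)
    have h3 : (x - z) ^ q ≤ |x ^ q - z ^ q| := by
      rw [abs_of_nonneg (by linarith)]
      have := Real.rpow_nonneg hz q
      linarith
    calc x - z = ((x - z) ^ q) ^ q⁻¹ := by rw [Real.rpow_rpow_inv hxz hq0]
      _ ≤ |x ^ q - z ^ q| ^ q⁻¹ := Real.rpow_le_rpow (Real.rpow_nonneg hxz _) h3
          (by positivity)
  rcases le_total z x with h | h
  · rw [abs_of_nonneg (by linarith)]; exact main x z hx hz h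
  · rw [abs_of_nonpos (by linarith), abs_sub_comm (x ^ q)]
    have := main z x hz hx h
    linarith [this]
lemma main_real {d σ : ℕ} (hσ : 0 < σ) (q : ℝ) (hq : 1 ≤ q)
    (a f : (Fin d → ℝ) → ℝ) (ha : ContDiff ℝ (⊤ : ℕ∞) a) (hf : Continuous f)
    (hperf : ZPer d f)
    (M : ℝ) (hM1 : ∀ x, |a x| ≤ M) (hM2 : ∀ x, ‖fderiv ℝ a x‖ ≤ M) :
    |(∫ x in Icc (0 : Fin d → ℝ) 1, |a x * f ((σ:ℝ) • x)| ^ q)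
        - (∫ x in Icc (0 : Fin d → ℝ) 1, |a x| ^ q) * ∫ x in Icc (0 : Fin d → ℝ) 1, |f x| ^ q|
      ≤ 2 * (q * M ^ q) * (σ:ℝ)⁻¹ * ∫ x in Icc (0 : Fin d → ℝ) 1, |f x| ^ q := by
  have hq0 : (0:ℝ) < q := by linarith
  have hM0 : 0 ≤ M := le_trans (abs_nonneg _) (hM1 0)
  set A : (Fin d → ℝ) → ℝ := fun x => |a x| ^ q with hA
  set G : (Fin d → ℝ) → ℝ := fun x => |f x| ^ q with hG
  have hAc : Continuous A := (ha.continuous.abs).rpow_const (fun x => Or.inr (by linarith))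
  have hGc : Continuous G := (hf.abs).rpow_const (fun x => Or.inr (by linarith))
  have hGper : ∀ (x : Fin d → ℝ) (n : Fin d → ℤ), G (x + fun i => (n i : ℝ)) = G x := by
    intro x n
    simp only [hG, hperf x n]
  have hG0 : ∀ x, 0 ≤ G x := fun x => Real.rpow_nonneg (abs_nonneg _) _
  have haLip : ∀ u v, |a u - a v| ≤ M * ‖u - v‖ := by
    intro u v
    have := Convex.norm_image_sub_le_of_norm_fderiv_le
      (fun x _ => (ha.differentiable (by simp) x)) (fun x _ => hM2 x) convex_univ
      (Set.mem_univ v) (Set.mem_univ u)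
    simpa [Real.norm_eq_abs] using this
  have hMq : M ^ (q - 1) * M = M ^ q := by
    rcases eq_or_lt_of_le hM0 with h | h
    · rw [← h]
      rw [Real.zero_rpow (by linarith : q ≠ 0)]
      ring
    · have h2 : M ^ (q-1) * M ^ (1:ℝ) = M ^ (q-1+1) := (Real.rpow_add h _ _).symm
      rw [Real.rpow_one] at h2
      rw [h2, sub_add_cancel]
  have hlip : ∀ u v, |A u - A v| ≤ (q * M ^ q) * ‖u - v‖ := by
    intro u v
    have h1 : |A u - A v| ≤ q * M ^ (q - 1) * |(|a u| - |a v|)| :=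
      rpow_lip hq ⟨abs_nonneg _, hM1 u⟩ ⟨abs_nonneg _, hM1 v⟩
    have h2 : |(|a u| - |a v|)| ≤ |a u - a v| := abs_abs_sub_abs_le_abs_sub _ _
    calc |A u - A v| ≤ q * M ^ (q - 1) * |(|a u| - |a v|)| := h1
      _ ≤ q * M ^ (q - 1) * (M * ‖u - v‖) := by
          apply mul_le_mul_of_nonneg_left (h2.trans (haLip u v))
          positivity
      _ = (q * M ^ q) * ‖u - v‖ := by rw [← hMq]; ring
  have hint : ∀ x, A x * G ((σ:ℝ) • x) = |a x * f ((σ:ℝ) • x)| ^ q := by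
    intro x
    rw [hA, hG]
    rw [abs_mul, Real.mul_rpow (abs_nonneg _) (abs_nonneg _)]
  have := key_est hσ A G hAc hGc hGper hG0 (q * M ^ q) (by positivity) hlip
  have heq : (∫ x in Icc (0 : Fin d → ℝ) 1, A x * G ((σ:ℝ) • x))
      = ∫ x in Icc (0 : Fin d → ℝ) 1, |a x * f ((σ:ℝ) • x)| ^ q := by
    apply setIntegral_congr_fun measurableSet_Icc
    intro x _
    exact hint x
  rw [heq] at this
  exact this

instance ifm {d : ℕ} : IsFiniteMeasure ((volume : Measure (Fin d → ℝ)).restrict (Icc 0 1)) := by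
  constructor
  rw [Measure.restrict_apply_univ, volume_Icc01]
  exact ENNReal.one_lt_top

/-- `L^p`-norm of a bounded continuous function as a real integral, `0 < p < ∞`. -/
lemma lp_eq {d : ℕ} (p : ℝ≥0∞) (hp0 : p ≠ 0) (hpt : p ≠ ⊤) (g : (Fin d → ℝ) → ℝ)
    (hg : Continuous g) (Mg : ℝ) (hMg : ∀ x, |g x| ≤ Mg) :
    eLpNorm g p (volume.restrict (Icc (0 : Fin d → ℝ) 1))
      = ENNReal.ofReal ((∫ x in Icc (0 : Fin d → ℝ) 1, |g x| ^ p.toReal) ^ (p.toReal)⁻¹) := by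
  have hmem : MemLp g p (volume.restrict (Icc (0 : Fin d → ℝ) 1)) :=
    MemLp.of_bound hg.aestronglyMeasurable Mg
      (Filter.Eventually.of_forall (fun x => by rw [Real.norm_eq_abs]; exact hMg x))
  rw [hmem.eLpNorm_eq_integral_rpow_norm hp0 hpt]
  congr 1

/-- value at any point of `[0,1]^d` is a lower bound for the `L^∞` norm of a continuous
function on `[0,1]^d`. -/
lemma ofReal_le_eLpNormTop {d : ℕ} (g : (Fin d → ℝ) → ℝ) (hg : Continuous g)
    (x0 : Fin d → ℝ) (hx0 : x0 ∈ Icc (0 : Fin d → ℝ) 1) :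
    ENNReal.ofReal |g x0| ≤ eLpNorm g ⊤ (volume.restrict (Icc (0 : Fin d → ℝ) 1)) := by
  rw [eLpNorm_exponent_top]
  have hclos : x0 ∈ closure (Set.pi Set.univ (fun _ : Fin d => Ioo (0:ℝ) 1)) := by
    rw [closure_pi_set]
    simp only [closure_Ioo (zero_ne_one (α := ℝ))]
    rw [Set.pi_univ_Icc]
    exact hx0
  have hsub : Set.pi Set.univ (fun _ : Fin d => Ioo (0:ℝ) 1) ⊆ Icc 0 1 := by
    rw [← Set.pi_univ_Icc]
    exact Set.pi_mono (fun i _ => Set.Ioo_subset_Icc_self)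
  rw [← Real.enorm_eq_ofReal_abs]
  apply ENNReal.le_of_forall_nnreal_lt
  intro r hr
  by_contra hcon
  push_neg at hcon
  have hae := ae_lt_of_essSup_lt hcon
  set V : Set (Fin d → ℝ) := {x | (r:ℝ) < |g x|} with hV
  have hVopen : IsOpen V := isOpen_lt continuous_const (hg.abs)
  have habs : (0:ℝ) < |g x0| := by
    by_contra hle
    push_neg at hle
    rw [Real.enorm_eq_ofReal_abs, ENNReal.ofReal_eq_zero.mpr hle] at hr
    simpa using hr
  have hx0V : x0 ∈ V := by
    rw [hV, Set.mem_setOf_eq]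
    rw [Real.enorm_eq_ofReal_abs, ← ENNReal.ofReal_coe_nnreal] at hr
    exact (ENNReal.ofReal_lt_ofReal_iff habs).mp hr
  -- V ∩ open box is nonempty open
  obtain ⟨y, hyV, hybox⟩ : (V ∩ Set.pi Set.univ (fun _ : Fin d => Ioo (0:ℝ) 1)).Nonempty := by
    have := mem_closure_iff.mp hclos V hVopen hx0V
    exact this
  have hpos : 0 < (volume : Measure (Fin d → ℝ)) (V ∩ Set.pi Set.univ (fun _ : Fin d => Ioo (0:ℝ) 1)) :=
    (hVopen.inter (isOpen_set_pi Set.finite_univ (fun i _ => isOpen_Ioo))).measure_pos volume ⟨y, hyV, hybox⟩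
  -- but a.e. x, ‖g x‖₊ < r
  have hnull : (volume.restrict (Icc (0 : Fin d → ℝ) 1)) V = 0 := by
    have : ∀ᵐ x ∂(volume.restrict (Icc (0 : Fin d → ℝ) 1)), x ∉ V := by
      filter_upwards [hae] with x hx
      rw [hV, Set.mem_setOf_eq]
      push_neg
      have : ‖g x‖₊ ≤ r := le_of_lt (by exact_mod_cast hx)
      calc |g x| = ‖g x‖ := (Real.norm_eq_abs _).symm
        _ ≤ r := this
    exact measure_eq_zero_iff_ae_notMem.mpr this
  rw [Measure.restrict_apply hVopen.measurableSet] at hnull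
  have hle2 : (volume : Measure (Fin d → ℝ)) (V ∩ Set.pi Set.univ (fun _ : Fin d => Ioo (0:ℝ) 1))
      ≤ volume (V ∩ Icc 0 1) := measure_mono (inter_subset_inter_right _ hsub)
  rw [hnull] at hle2
  exact absurd (lt_of_lt_of_le hpos hle2) (lt_irrefl 0)


/-- ENNReal assembly helper -/
lemma assemble {x z c1 c2 M mr : ℝ} (hz : 0 ≤ z) (hc1 : 0 ≤ c1) (hc2 : 0 ≤ c2)
    (hM : 0 ≤ M) (hmr : 0 ≤ mr) (h : x ≤ z + c1 * c2 * M * mr)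
    (Cbig c1N : ℝ≥0∞) (hCbig : ENNReal.ofReal c1 ≤ Cbig) (hc1N : ENNReal.ofReal M ≤ c1N) :
    ENNReal.ofReal x ≤ ENNReal.ofReal z
      + Cbig * ENNReal.ofReal c2 * c1N * ENNReal.ofReal mr := by
  calc ENNReal.ofReal x ≤ ENNReal.ofReal (z + c1 * c2 * M * mr) := ENNReal.ofReal_le_ofReal h
    _ = ENNReal.ofReal z + ENNReal.ofReal (c1 * c2 * M * mr) :=
        ENNReal.ofReal_add hz (by positivity)
    _ = ENNReal.ofReal z + ENNReal.ofReal c1 * ENNReal.ofReal c2 * ENNReal.ofReal M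
          * ENNReal.ofReal mr := by
        rw [ENNReal.ofReal_mul (by positivity), ENNReal.ofReal_mul (by positivity),
          ENNReal.ofReal_mul hc1]
    _ ≤ ENNReal.ofReal z + Cbig * ENNReal.ofReal c2 * c1N * ENNReal.ofReal mr := by
        apply add_le_add_right
        exact mul_le_mul' (mul_le_mul' (mul_le_mul' hCbig le_rfl) hc1N) le_rfl

end Lemmas

section Main
open Set

/-- **Improved Hölder inequality on the torus.**  Let `d ≥ 2` and `p ∈ [1,∞]`.  There is a
constant `C` (independent of `σ`) such that for all smooth periodic `a, f : 𝕋^d → ℝ` and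
every `σ ∈ ℕ`, `| ‖a · f(σ·)‖_{L^p} − ‖a‖_{L^p} ‖f‖_{L^p} | ≤ C σ^{−1/p} ‖a‖_{C^1} ‖f‖_{L^p}`
(stated as the two one-sided inequalities). -/
theorem improved_holder_torus (d : ℕ) (hd : 2 ≤ d) (p : ℝ≥0∞) (hp : 1 ≤ p) :
    ∃ C : ℝ≥0∞, 0 < C ∧ C < ⊤ ∧
      ∀ (a f : (Fin d → ℝ) → ℝ),
        ContDiff ℝ (⊤ : ℕ∞) a → ContDiff ℝ (⊤ : ℕ∞) f → ZPer d a → ZPer d f →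
        ∀ σ : ℕ, 0 < σ →
          (lpNorm d p (fun x => a x * f ((σ : ℝ) • x))
              ≤ lpNorm d p a * lpNorm d p f
                + C * ENNReal.ofReal ((σ : ℝ) ^ (-(p⁻¹.toReal)))
                  * c1Norm d a * lpNorm d p f)
          ∧ (lpNorm d p a * lpNorm d p f
              ≤ lpNorm d p (fun x => a x * f ((σ : ℝ) • x))
                + C * ENNReal.ofReal ((σ : ℝ) ^ (-(p⁻¹.toReal)))
                  * c1Norm d a * lpNorm d p f) := by
  set C : ℝ≥0∞ := ENNReal.ofReal ((2 * p.toReal) ^ (p.toReal)⁻¹) + 1 with hC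
  have hCge1 : 1 ≤ C := le_add_self
  refine ⟨C, lt_of_lt_of_le zero_lt_one hCge1,
    ENNReal.add_lt_top.mpr ⟨ENNReal.ofReal_lt_top, ENNReal.one_lt_top⟩, ?_⟩
  intro a f ha hf hpera hperf σ hσ
  obtain ⟨xa, hxa, hMa⟩ := exists_max a ha.continuous hpera
  obtain ⟨xd, hxd, hMd⟩ := exists_max (fderiv ℝ a) (ha.continuous_fderiv (by simp))
    (fderiv_zper ha hpera)
  obtain ⟨xf, hxf, hMf⟩ := exists_max f hf.continuous hperf
  set M : ℝ := |a xa| + ‖fderiv ℝ a xd‖ with hM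
  have hM0 : 0 ≤ M := by positivity
  have hM1 : ∀ x, |a x| ≤ M := fun x => by
    have h1 := hMa x
    rw [Real.norm_eq_abs, Real.norm_eq_abs] at h1
    have h2 := norm_nonneg (fderiv ℝ a xd)
    rw [hM]; linarith
  have hM2 : ∀ x, ‖fderiv ℝ a x‖ ≤ M := fun x => by
    have h1 := hMd x
    have h2 := abs_nonneg (a xa)
    rw [hM]; linarith
  have hc1 : ENNReal.ofReal M ≤ c1Norm d a := by
    rw [hM, ENNReal.ofReal_add (abs_nonneg _) (norm_nonneg _)]
    unfold c1Norm
    apply add_le_add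
    · calc ENNReal.ofReal |a xa| = (‖a xa‖₊ : ℝ≥0∞) := (Real.enorm_eq_ofReal_abs _).symm
        _ ≤ ⨆ x, (‖a x‖₊ : ℝ≥0∞) := le_iSup (fun x => ((‖a x‖₊ : ℝ≥0∞))) xa
    · calc ENNReal.ofReal ‖fderiv ℝ a xd‖ = (‖fderiv ℝ a xd‖₊ : ℝ≥0∞) :=
          ofReal_norm _
        _ ≤ ⨆ x, (‖fderiv ℝ a x‖₊ : ℝ≥0∞) := le_iSup (fun x => ((‖fderiv ℝ a x‖₊ : ℝ≥0∞))) xd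
  set Mf : ℝ := |f xf| with hMfdef
  have hMf' : ∀ x, |f x| ≤ Mf := fun x => by
    have h1 := hMf x
    rw [Real.norm_eq_abs, Real.norm_eq_abs] at h1
    exact h1
  have hMf0 : (0:ℝ) ≤ Mf := abs_nonneg _
  have hafc : Continuous (fun x => a x * f ((σ:ℝ) • x)) :=
    ha.continuous.mul (hf.continuous.comp (continuous_const_smul _))
  have hafb : ∀ x, |a x * f ((σ:ℝ) • x)| ≤ M * Mf := fun x => by
    rw [abs_mul]
    exact mul_le_mul (hM1 x) (hMf' _) (abs_nonneg _) hM0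
  by_cases hpt : p = ⊤
  · subst hpt
    have hone : ENNReal.ofReal ((σ:ℝ) ^ (-((⊤:ℝ≥0∞)⁻¹.toReal))) = 1 := by
      norm_num
    have hCterm : ∀ (Y : ℝ≥0∞), c1Norm d a * Y
        ≤ C * ENNReal.ofReal ((σ:ℝ) ^ (-((⊤:ℝ≥0∞)⁻¹.toReal))) * c1Norm d a * Y := by
      intro Y
      rw [hone, mul_one]
      calc c1Norm d a * Y = 1 * (c1Norm d a * Y) := (one_mul _).symm
        _ ≤ C * (c1Norm d a * Y) := mul_le_mul' hCge1 le_rfl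
        _ = C * c1Norm d a * Y := (mul_assoc _ _ _).symm
    constructor
    · have b1 : lpNorm d ⊤ (fun x => a x * f ((σ:ℝ) • x)) ≤ ENNReal.ofReal (M * Mf) := by
        have h1 := eLpNorm_le_of_ae_bound (μ := volume.restrict (Icc (0:Fin d→ℝ) 1))
          (p := (⊤:ℝ≥0∞)) (f := fun x => a x * f ((σ:ℝ) • x)) (C := M * Mf)
          (Filter.Eventually.of_forall (fun x => by rw [Real.norm_eq_abs]; exact hafb x))
        rw [Measure.restrict_apply_univ, volume_Icc01] at h1
        simpa [_root_.lpNorm] using h1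
      have b2 : ENNReal.ofReal Mf ≤ lpNorm d ⊤ f :=
        ofReal_le_eLpNormTop f hf.continuous xf hxf
      calc lpNorm d ⊤ (fun x => a x * f ((σ:ℝ) • x)) ≤ ENNReal.ofReal (M * Mf) := b1
        _ = ENNReal.ofReal M * ENNReal.ofReal Mf := ENNReal.ofReal_mul hM0
        _ ≤ c1Norm d a * lpNorm d ⊤ f := mul_le_mul' hc1 b2
        _ ≤ C * ENNReal.ofReal ((σ:ℝ) ^ (-((⊤:ℝ≥0∞)⁻¹.toReal))) * c1Norm d a * lpNorm d ⊤ f :=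
            hCterm _
        _ ≤ lpNorm d ⊤ a * lpNorm d ⊤ f
              + C * ENNReal.ofReal ((σ:ℝ) ^ (-((⊤:ℝ≥0∞)⁻¹.toReal))) * c1Norm d a
                * lpNorm d ⊤ f := le_add_self
    · have b3 : lpNorm d ⊤ a ≤ ENNReal.ofReal M := by
        have h1 := eLpNorm_le_of_ae_bound (μ := volume.restrict (Icc (0:Fin d→ℝ) 1))
          (p := (⊤:ℝ≥0∞)) (f := a) (C := M)
          (Filter.Eventually.of_forall (fun x => by rw [Real.norm_eq_abs]; exact hM1 x))
        rw [Measure.restrict_apply_univ, volume_Icc01] at h1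
        simpa [_root_.lpNorm] using h1
      calc lpNorm d ⊤ a * lpNorm d ⊤ f ≤ ENNReal.ofReal M * lpNorm d ⊤ f :=
            mul_le_mul' b3 le_rfl
        _ ≤ c1Norm d a * lpNorm d ⊤ f := mul_le_mul' hc1 le_rfl
        _ ≤ C * ENNReal.ofReal ((σ:ℝ) ^ (-((⊤:ℝ≥0∞)⁻¹.toReal))) * c1Norm d a * lpNorm d ⊤ f :=
            hCterm _
        _ ≤ lpNorm d ⊤ (fun x => a x * f ((σ:ℝ) • x))
              + C * ENNReal.ofReal ((σ:ℝ) ^ (-((⊤:ℝ≥0∞)⁻¹.toReal))) * c1Norm d a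
                * lpNorm d ⊤ f := le_add_self
  · have hp0 : p ≠ 0 := (zero_lt_one.trans_le hp).ne'
    have hq : 1 ≤ p.toReal := by
      rw [← ENNReal.toReal_one]
      exact (ENNReal.toReal_le_toReal ENNReal.one_ne_top hpt).mpr hp
    set q : ℝ := p.toReal with hqdef
    have hq0 : (0:ℝ) < q := by linarith
    have hq0' : q ≠ 0 := ne_of_gt hq0
    have hσR : (0:ℝ) < (σ:ℝ) := by exact_mod_cast hσ
    set X : ℝ := ∫ x in Icc (0:Fin d→ℝ) 1, |a x * f ((σ:ℝ) • x)| ^ q with hX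
    set U : ℝ := ∫ x in Icc (0:Fin d→ℝ) 1, |a x| ^ q with hU
    set W : ℝ := ∫ x in Icc (0:Fin d→ℝ) 1, |f x| ^ q with hW
    have hX0 : 0 ≤ X := setIntegral_nonneg measurableSet_Icc
      (fun x _ => Real.rpow_nonneg (abs_nonneg _) _)
    have hU0 : 0 ≤ U := setIntegral_nonneg measurableSet_Icc
      (fun x _ => Real.rpow_nonneg (abs_nonneg _) _)
    have hW0 : 0 ≤ W := setIntegral_nonneg measurableSet_Icc
      (fun x _ => Real.rpow_nonneg (abs_nonneg _) _)
    have hxr0 : (0:ℝ) ≤ X ^ q⁻¹ := Real.rpow_nonneg hX0 _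
    have hur0 : (0:ℝ) ≤ U ^ q⁻¹ := Real.rpow_nonneg hU0 _
    have hwr0 : (0:ℝ) ≤ W ^ q⁻¹ := Real.rpow_nonneg hW0 _
    have lpaf : lpNorm d p (fun x => a x * f ((σ:ℝ) • x)) = ENNReal.ofReal (X ^ q⁻¹) :=
      lp_eq p hp0 hpt _ hafc (M * Mf) hafb
    have lpa : lpNorm d p a = ENNReal.ofReal (U ^ q⁻¹) :=
      lp_eq p hp0 hpt a ha.continuous M hM1
    have lpf : lpNorm d p f = ENNReal.ofReal (W ^ q⁻¹) :=
      lp_eq p hp0 hpt f hf.continuous Mf hMf'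
    have hmain := main_real hσ q hq a f ha hf.continuous hperf M hM1 hM2
    rw [← hX, ← hU, ← hW] at hmain
    have hurwr : (U ^ q⁻¹ * W ^ q⁻¹) ^ q = U * W := by
      rw [← Real.mul_rpow hU0 hW0, Real.rpow_inv_rpow (by positivity) hq0']
    have hxrq : (X ^ q⁻¹) ^ q = X := Real.rpow_inv_rpow hX0 hq0'
    have key : |X ^ q⁻¹ - U ^ q⁻¹ * W ^ q⁻¹|
        ≤ (2*q) ^ q⁻¹ * (σ:ℝ) ^ (-(q⁻¹)) * M * W ^ q⁻¹ := by
      have h1 : |X ^ q⁻¹ - U ^ q⁻¹ * W ^ q⁻¹| ≤ |X - U * W| ^ q⁻¹ := by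
        have h0 := abs_sub_le_rpow (q := q) (x := X ^ q⁻¹) (z := U ^ q⁻¹ * W ^ q⁻¹)
          hq hxr0 (by positivity)
        rwa [hxrq, hurwr] at h0
      have h2 : |X - U * W| ^ q⁻¹ ≤ (2*(q*M^q) * (σ:ℝ)⁻¹ * W) ^ q⁻¹ :=
        Real.rpow_le_rpow (abs_nonneg _) hmain (by positivity)
      have h3 : (2*(q*M^q) * (σ:ℝ)⁻¹ * W) ^ q⁻¹
          = (2*q) ^ q⁻¹ * (σ:ℝ) ^ (-(q⁻¹)) * M * W ^ q⁻¹ := by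
        rw [show 2*(q*M^q) * (σ:ℝ)⁻¹ * W = ((2*q) * M^q * (σ:ℝ)⁻¹) * W by ring]
        rw [Real.mul_rpow (by positivity) hW0,
          Real.mul_rpow (by positivity) (by positivity),
          Real.mul_rpow (by positivity) (Real.rpow_nonneg hM0 _),
          Real.rpow_rpow_inv hM0 hq0', Real.inv_rpow hσR.le, ← Real.rpow_neg hσR.le]
        ring
      exact h1.trans (h2.trans_eq h3)
    have hexp : -(p⁻¹.toReal) = -(q⁻¹) := by rw [ENNReal.toReal_inv]
    have habs := abs_le.mp key
    rw [lpaf, lpa, lpf, hexp]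
    constructor
    · rw [← ENNReal.ofReal_mul hur0]
      exact assemble (by positivity) (Real.rpow_nonneg (by positivity) _)
        (Real.rpow_nonneg hσR.le _) hM0 hwr0 (by linarith [habs.2]) C (c1Norm d a)
        le_self_add hc1
    · rw [← ENNReal.ofReal_mul hur0]
      exact assemble hxr0 (Real.rpow_nonneg (by positivity) _)
        (Real.rpow_nonneg hσR.le _) hM0 hwr0 (by linarith [habs.1]) C (c1Norm d a)
        le_self_add hc1

end Main
end
end

section
/- Geometric lemma for the annulus: let d ≥ 2 and let B̄₁(0) \ B_{1/2}(0) denote the closed annulus {R ∈ ℝ^d : 1/2 ≤ |R| ≤ 1}. There exists a finite set Λ ⊂ 𝕊^{d−1} ∩ ℚ^d and, for each ξ ∈ Λ, a nonnegative C^∞ function Γ_ξ : B̄₁(0)\B_{1/2}(0) → ℝ such that every R with 1/2 ≤ |R| ≤ 1 satisfies R = Σ_{ξ∈Λ} Γ_ξ(R) ξ. -/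
open scoped BigOperators
open RealInnerProductSpace

noncomputable section

/-- **Geometric lemma for the annulus.**  Let `d ≥ 2`.  There exists a finite set
`Λ ⊂ 𝕊^{d−1} ∩ ℚ^d` and, for each `ξ ∈ Λ`, a nonnegative smooth function
`Γ_ξ : B̄₁(0) \ B_{1/2}(0) → ℝ` such that every `R ∈ ℝ^d` with `1/2 ≤ |R| ≤ 1` satisfies
`R = ∑_{ξ ∈ Λ} Γ_ξ(R) ξ`. -/
theorem geometric_lemma_annulus (d : ℕ) (hd : 2 ≤ d) :
    ∃ Λ : Finset (EuclideanSpace ℝ (Fin d)),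
      (∀ ξ ∈ Λ, ‖ξ‖ = 1 ∧ ∀ i, ∃ q : ℚ, ξ i = (q : ℝ)) ∧
      ∃ Γ : EuclideanSpace ℝ (Fin d) → EuclideanSpace ℝ (Fin d) → ℝ,
        (∀ ξ ∈ Λ, ContDiffOn ℝ (⊤ : ℕ∞) (Γ ξ)
          {R : EuclideanSpace ℝ (Fin d) | 1/2 ≤ ‖R‖ ∧ ‖R‖ ≤ 1}) ∧
        (∀ ξ ∈ Λ, ∀ R : EuclideanSpace ℝ (Fin d),
          1/2 ≤ ‖R‖ → ‖R‖ ≤ 1 → 0 ≤ Γ ξ R) ∧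
        (∀ R : EuclideanSpace ℝ (Fin d), 1/2 ≤ ‖R‖ → ‖R‖ ≤ 1 →
          R = ∑ ξ ∈ Λ, Γ ξ R • ξ) := by
  classical
  set E : Fin d → EuclideanSpace ℝ (Fin d) := fun i => EuclideanSpace.single i (1:ℝ) with hE
  have hEnorm : ∀ i, ‖E i‖ = 1 := by
    intro i; simp [hE, EuclideanSpace.norm_single]
  have hEne : ∀ i j, E i ≠ -E j := by
    intro i j h
    have h1 : (E i) i = (-E j) i := by rw [h]
    have h2 : (E i) i = 1 := by simp [hE, EuclideanSpace.single_apply]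
    have h3 : (-E j) i ≤ 0 := by
      by_cases hji : j = i <;> simp [hE, EuclideanSpace.single_apply, hji] <;> split <;> norm_num
    rw [h2] at h1; linarith [h1 ▸ h3]
  have hEinj : Function.Injective E := by
    intro i j h
    by_contra hij
    have h1 : (E i) i = (E j) i := by rw [h]
    simp only [hE, EuclideanSpace.single_apply, if_pos rfl, if_neg hij] at h1
    exact one_ne_zero h1
  refine ⟨(Finset.univ.image E) ∪ (Finset.univ.image fun i => -E i), ?_, ?_⟩
  · intro ξ hξ
    simp only [Finset.mem_union, Finset.mem_image, Finset.mem_univ, true_and] at hξ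
    obtain ⟨i, rfl⟩ | ⟨i, rfl⟩ := hξ
    · refine ⟨hEnorm i, fun j => ?_⟩
      by_cases hji : j = i
      · exact ⟨1, by simp [hE, EuclideanSpace.single_apply, hji]⟩
      · exact ⟨0, by simp [hE, EuclideanSpace.single_apply, hji]⟩
    · refine ⟨by rw [norm_neg]; exact hEnorm i, fun j => ?_⟩
      by_cases hji : j = i
      · exact ⟨-1, by simp [hE, EuclideanSpace.single_apply, hji]⟩
      · exact ⟨0, by simp [hE, EuclideanSpace.single_apply, hji]⟩
  · refine ⟨fun ξ R => ⟪R, ξ⟫ / 2 + 1, ?_, ?_, ?_⟩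
    · intro ξ _
      exact (((contDiff_id.inner ℝ contDiff_const).div_const 2).add contDiff_const).contDiffOn
    · intro ξ hξ R hR1 hR2
      have hξn : ‖ξ‖ = 1 := by
        simp only [Finset.mem_union, Finset.mem_image, Finset.mem_univ, true_and] at hξ
        obtain ⟨i, rfl⟩ | ⟨i, rfl⟩ := hξ
        · exact hEnorm i
        · rw [norm_neg]; exact hEnorm i
      have h := abs_real_inner_le_norm R ξ
      rw [hξn, mul_one] at h
      have hn := neg_abs_le ⟪R, ξ⟫
      linarith
    · intro R _ _
      have hdisj : Disjoint (Finset.univ.image E) (Finset.univ.image fun i => -E i) := by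
        rw [Finset.disjoint_left]
        rintro ξ h1 h2
        simp only [Finset.mem_image, Finset.mem_univ, true_and] at h1 h2
        obtain ⟨i, rfl⟩ := h1
        obtain ⟨j, hj⟩ := h2
        exact hEne i j hj.symm
      rw [Finset.sum_union hdisj,
        Finset.sum_image (fun i _ j _ h => hEinj h),
        Finset.sum_image (fun i _ j _ h => hEinj (neg_injective h))]
      have : ∑ i, (⟪R, E i⟫ / 2 + 1) • E i + ∑ i, (⟪R, -E i⟫ / 2 + 1) • (-E i)
          = ∑ i, ⟪R, E i⟫ • E i := by
        rw [← Finset.sum_add_distrib]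
        congr 1; funext i
        rw [inner_neg_right]
        module
      rw [this]
      have hb := (EuclideanSpace.basisFun (Fin d) ℝ).sum_repr' R
      simpa [hE, EuclideanSpace.basisFun_apply, real_inner_comm] using hb.symm
end
end

section
/- The operator R defined on mean-zero vector fields v on 𝕋^d by (Rv)_{ij} = R_{ijk} v_k, where R_{ijk} = ((2−d)/(d−1)) Δ^{−2} ∂_i ∂_j ∂_k − (1/(d−1)) Δ^{−1} ∂_k δ_{ij} + Δ^{−1} ∂_i δ_{jk} + Δ^{−1} ∂_j δ_{ik}, produces for each smooth mean-zero v a symmetric trace-free matrix field Rv satisfying div(Rv) = v. -/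
open MeasureTheory
open scoped BigOperators

noncomputable section

variable {d : ℕ}

/-- Partial derivative `∂ᵢ f` of a scalar function on `ℝ^d`. -/
noncomputable def pdd (d : ℕ) (i : Fin d) (f : (Fin d → ℝ) → ℝ) (x : Fin d → ℝ) : ℝ :=
  fderiv ℝ f x (Pi.single i 1)

/-- The Laplacian of a scalar function on `ℝ^d`. -/
noncomputable def lap (d : ℕ) (f : (Fin d → ℝ) → ℝ) (x : Fin d → ℝ) : ℝ :=
  ∑ i, pdd d i (fun y => pdd d i f y) x

/-- `ℤ^d`-periodicity of a vector field on `ℝ^d`. -/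
def ZPerV (d : ℕ) (v : (Fin d → ℝ) → (Fin d → ℝ)) : Prop :=
  ∀ (x : Fin d → ℝ) (n : Fin d → ℤ), v (x + fun i => (n i : ℝ)) = v x

/-- The matrix field `(R v)_{ij}` produced by the inverse divergence operator, expressed
through the potentials `φ = Δ⁻¹ v` and `χ = Δ⁻² v`:
`(Rv)_{ij} = ((2−d)/(d−1)) ∂_i∂_j∂_k χ_k − (1/(d−1)) ∂_k φ_k δ_{ij} + ∂_i φ_j + ∂_j φ_i`. -/
noncomputable def invDivMatrix (d : ℕ) (φ χ : (Fin d → ℝ) → (Fin d → ℝ))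
    (x : Fin d → ℝ) (i j : Fin d) : ℝ :=
  ((2 - (d : ℝ)) / ((d : ℝ) - 1))
      * ∑ k, pdd d i (fun y => pdd d j (fun z => pdd d k (fun w => χ w k) z) y) x
    - (1 / ((d : ℝ) - 1)) * (if i = j then ∑ k, pdd d k (fun y => φ y k) x else 0)
    + pdd d i (fun y => φ y j) x + pdd d j (fun y => φ y i) x

lemma pdd_contDiff {d : ℕ} {f : (Fin d → ℝ) → ℝ} (hf : ContDiff ℝ (⊤ : ℕ∞) f) (i : Fin d) :
    ContDiff ℝ (⊤ : ℕ∞) (pdd d i f) := by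
  unfold pdd
  exact (hf.fderiv_right (by simp)).clm_apply contDiff_const

lemma pdd_swap {d : ℕ} {f : (Fin d → ℝ) → ℝ} (hf : ContDiff ℝ (⊤ : ℕ∞) f) (i j : Fin d)
    (x : Fin d → ℝ) : pdd d i (pdd d j f) x = pdd d j (pdd d i f) x := by
  have hdf : Differentiable ℝ f := hf.differentiable (by simp)
  have hdf' : Differentiable ℝ (fderiv ℝ f) :=
    (hf.fderiv_right (m := (⊤ : ℕ∞)) (by simp)).differentiable (by simp)
  have key : ∀ a b : Fin d → ℝ,
      fderiv ℝ (fun y => fderiv ℝ f y a) x b = fderiv ℝ (fderiv ℝ f) x b a := by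
    intro a b
    rw [fderiv_clm_apply (hdf' x) (differentiableAt_const a)]
    simp
  have hsymm := second_derivative_symmetric (f := f) (fun y => (hdf y).hasFDerivAt)
    (hdf' x).hasFDerivAt (Pi.single i 1) (Pi.single j 1)
  show fderiv ℝ (fun y => fderiv ℝ f y (Pi.single j 1)) x (Pi.single i 1)
      = fderiv ℝ (fun y => fderiv ℝ f y (Pi.single i 1)) x (Pi.single j 1)
  rw [key, key]
  exact hsymm

lemma pdd_add {d : ℕ} {f g : (Fin d → ℝ) → ℝ} (i : Fin d) (x : Fin d → ℝ)
    (hf : DifferentiableAt ℝ f x) (hg : DifferentiableAt ℝ g x) :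
    pdd d i (fun y => f y + g y) x = pdd d i f x + pdd d i g x := by
  unfold pdd; rw [fderiv_fun_add hf hg]; simp

lemma pdd_sub {d : ℕ} {f g : (Fin d → ℝ) → ℝ} (i : Fin d) (x : Fin d → ℝ)
    (hf : DifferentiableAt ℝ f x) (hg : DifferentiableAt ℝ g x) :
    pdd d i (fun y => f y - g y) x = pdd d i f x - pdd d i g x := by
  unfold pdd; rw [fderiv_fun_sub hf hg]; simp

lemma pdd_const_mul {d : ℕ} {f : (Fin d → ℝ) → ℝ} (c : ℝ) (i : Fin d) (x : Fin d → ℝ)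
    (hf : DifferentiableAt ℝ f x) :
    pdd d i (fun y => c * f y) x = c * pdd d i f x := by
  unfold pdd; rw [fderiv_const_mul hf]; simp

lemma pdd_const {d : ℕ} (c : ℝ) (i : Fin d) (x : Fin d → ℝ) :
    pdd d i (fun _ => c) x = 0 := by
  unfold pdd; rw [fderiv_fun_const]; simp

lemma pdd_sum {d n : ℕ} {g : Fin n → (Fin d → ℝ) → ℝ} (i : Fin d) (x : Fin d → ℝ)
    (hg : ∀ k, DifferentiableAt ℝ (g k) x) :
    pdd d i (fun y => ∑ k, g k y) x = ∑ k, pdd d i (g k) x := by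
  unfold pdd
  rw [fderiv_fun_sum (fun k _ => hg k)]
  simp

/-- Laplacian commutes with a partial derivative for smooth functions. -/
lemma lap_pdd {d : ℕ} {f : (Fin d → ℝ) → ℝ} (hf : ContDiff ℝ (⊤ : ℕ∞) f) (k : Fin d)
    (x : Fin d → ℝ) : lap d (pdd d k f) x = pdd d k (lap d f) x := by
  unfold lap
  rw [pdd_sum k x (fun i => ((pdd_contDiff (pdd_contDiff hf i) i).differentiable
    (by simp)).differentiableAt)]
  refine Finset.sum_congr rfl (fun i _ => ?_)
  have h1 : pdd d i (pdd d k f) = pdd d k (pdd d i f) := funext (pdd_swap hf i k)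
  calc pdd d i (fun y => pdd d i (pdd d k f) y) x
      = pdd d i (pdd d k (pdd d i f)) x := by rw [show (fun y => pdd d i (pdd d k f) y) = pdd d k (pdd d i f) from h1]
    _ = pdd d k (pdd d i (pdd d i f)) x := pdd_swap (pdd_contDiff hf i) i k x
    _ = pdd d k (fun y => pdd d i (pdd d i f) y) x := rfl

/-- **Inverse divergence operator.**  For every smooth mean-zero periodic vector field
`v` on `𝕋^d` (with `d ≥ 2`) and potentials `φ = Δ⁻¹ v`, `χ = Δ⁻² v` (smooth, periodic,
mean-zero, characterized by `Δφ_k = v_k` and `Δχ_k = φ_k`), the matrix field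
`R v` defined by the kernel
`R_{ijk} = ((2−d)/(d−1)) Δ⁻² ∂_i∂_j∂_k − (1/(d−1)) Δ⁻¹ ∂_k δ_{ij} + Δ⁻¹ ∂_i δ_{jk} + Δ⁻¹ ∂_j δ_{ik}`
is symmetric and trace-free and satisfies `div (R v) = v` (row-wise). -/
theorem inverse_divergence_operator (d : ℕ) (hd : 2 ≤ d)
    (v φ χ : (Fin d → ℝ) → (Fin d → ℝ))
    (hv : ContDiff ℝ (⊤ : ℕ∞) v) (hφ : ContDiff ℝ (⊤ : ℕ∞) φ) (hχ : ContDiff ℝ (⊤ : ℕ∞) χ)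
    (hvper : ZPerV d v) (hφper : ZPerV d φ) (hχper : ZPerV d χ)
    (hvmean : ∀ k, ∫ x in Set.Icc (0 : Fin d → ℝ) 1, v x k = 0)
    (hφmean : ∀ k, ∫ x in Set.Icc (0 : Fin d → ℝ) 1, φ x k = 0)
    (hχmean : ∀ k, ∫ x in Set.Icc (0 : Fin d → ℝ) 1, χ x k = 0)
    (hΔφ : ∀ x k, lap d (fun y => φ y k) x = v x k)
    (hΔχ : ∀ x k, lap d (fun y => χ y k) x = φ x k) :
    (∀ x i j, invDivMatrix d φ χ x i j = invDivMatrix d φ χ x j i) ∧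
    (∀ x, ∑ i, invDivMatrix d φ χ x i i = 0) ∧
    (∀ x i, ∑ j, pdd d j (fun y => invDivMatrix d φ χ y i j) x = v x i) := by
  have hd1 : ((d : ℝ) - 1) ≠ 0 := by
    have : (2 : ℝ) ≤ (d : ℝ) := by exact_mod_cast hd
    linarith
  -- component smoothness
  have hφk : ∀ k, ContDiff ℝ (⊤ : ℕ∞) (fun y => φ y k) := fun k => (contDiff_pi.mp hφ) k
  have hχk : ∀ k, ContDiff ℝ (⊤ : ℕ∞) (fun y => χ y k) := fun k => (contDiff_pi.mp hχ) k
  -- notation shortcuts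
  set φf : Fin d → (Fin d → ℝ) → ℝ := fun k => (fun y => φ y k) with hφf
  set χf : Fin d → (Fin d → ℝ) → ℝ := fun k => (fun y => χ y k) with hχf
  -- S = div φ
  set S : (Fin d → ℝ) → ℝ := fun y => ∑ k, pdd d k (φf k) y with hS
  have hS_cd : ContDiff ℝ (⊤ : ℕ∞) S := ContDiff.sum (fun k _ => pdd_contDiff (hφk k) k)
  -- first part: A i j = ∑_k ∂_i∂_j∂_k χ_k
  set A : Fin d → Fin d → (Fin d → ℝ) → ℝ :=
    fun i j y => ∑ k, pdd d i (pdd d j (pdd d k (χf k))) y with hA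
  have hA_eq : ∀ i j x, (∑ k, pdd d i (fun y => pdd d j (fun z => pdd d k (fun w => χ w k) z) y) x)
      = A i j x := fun i j x => rfl
  have hA_symm : ∀ i j x, A i j x = A j i x := by
    intro i j x
    refine Finset.sum_congr rfl (fun k _ => ?_)
    exact pdd_swap (pdd_contDiff (hχk k) k) i j x
  refine ⟨?_, ?_, ?_⟩
  · -- symmetry
    intro x i j
    unfold invDivMatrix
    rw [hA_eq, hA_eq, hA_symm i j x]
    have : (if i = j then ∑ k, pdd d k (φf k) x else 0)
        = (if j = i then ∑ k, pdd d k (φf k) x else 0) := by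
      simp [eq_comm]
    rw [this]
    ring
  · -- trace free
    intro x
    have htrA : ∀ i, A i i x = ∑ k, pdd d i (pdd d i (pdd d k (χf k))) x := fun i => rfl
    have hsum : ∑ i, A i i x = S x := by
      rw [Finset.sum_comm (γ := Fin d)]
      refine Finset.sum_congr rfl (fun k _ => ?_)
      have : ∑ i, pdd d i (pdd d i (pdd d k (χf k))) x = lap d (pdd d k (χf k)) x := rfl
      rw [this, lap_pdd (hχk k) k x]
      have : lap d (χf k) = φf k := funext (fun y => hΔχ y k)
      rw [this]
    have expand : ∑ i, invDivMatrix d φ χ x i i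
        = ((2 - (d : ℝ)) / ((d : ℝ) - 1)) * (∑ i, A i i x)
          - (1 / ((d : ℝ) - 1)) * ((d : ℝ) * S x) + 2 * S x := by
      unfold invDivMatrix
      simp only [eq_self_iff_true, if_true]
      rw [Finset.sum_add_distrib, Finset.sum_add_distrib, Finset.sum_sub_distrib,
        ← Finset.mul_sum, ← Finset.mul_sum]
      have h1 : ∑ i : Fin d, (∑ k, pdd d i (fun y => pdd d i (fun z => pdd d k (fun w => χ w k) z) y) x)
          = ∑ i, A i i x := rfl
      have h2 : ∑ _i : Fin d, (∑ k, pdd d k (fun y => φ y k) x) = (d : ℝ) * S x := by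
        rw [Finset.sum_const]
        simp [hS, mul_comm]
        left; rfl
      rw [h1, h2]
      have h3 : ∑ i : Fin d, pdd d i (fun y => φ y i) x = S x := rfl
      rw [h3]
      ring
    rw [expand, hsum]
    field_simp
    ring
  · -- divergence
    intro x i
    -- differentiability facts
    have hA_cd : ∀ j, ContDiff ℝ (⊤ : ℕ∞) (A i j) := fun j =>
      ContDiff.sum (fun k _ => pdd_contDiff (pdd_contDiff (pdd_contDiff (hχk k) k) j) i)
    have hφij_cd : ∀ a b : Fin d, ContDiff ℝ (⊤ : ℕ∞) (pdd d a (φf b)) := fun a b =>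
      pdd_contDiff (hφk b) a
    -- rewrite each summand
    have step1 : ∀ j, pdd d j (fun y => invDivMatrix d φ χ y i j) x
        = ((2 - (d : ℝ)) / ((d : ℝ) - 1)) * pdd d j (A i j) x
          - (1 / ((d : ℝ) - 1)) * (if i = j then pdd d j S x else 0)
          + pdd d j (pdd d i (φf j)) x + pdd d j (pdd d j (φf i)) x := by
      intro j
      have hfun : (fun y => invDivMatrix d φ χ y i j)
          = fun y => (((2 - (d : ℝ)) / ((d : ℝ) - 1)) * A i j y
              - (1 / ((d : ℝ) - 1)) * (if i = j then S y else 0)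
              + pdd d i (φf j) y + pdd d j (φf i) y) := by
        funext y; rfl
      rw [hfun]
      have d1 : DifferentiableAt ℝ (fun y => ((2 - (d : ℝ)) / ((d : ℝ) - 1)) * A i j y) x :=
        (((hA_cd j).differentiable (by simp)) x).const_mul _
      have d2 : DifferentiableAt ℝ (fun y => (1 / ((d : ℝ) - 1)) * (if i = j then S y else 0)) x := by
        by_cases h : i = j
        · simp only [if_pos h]
          exact (((hS_cd).differentiable (by simp)) x).const_mul _
        · simp only [if_neg h]
          exact (differentiableAt_const 0).const_mul _
      have d3 : DifferentiableAt ℝ (pdd d i (φf j)) x :=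
        ((hφij_cd i j).differentiable (by simp)) x
      have d4 : DifferentiableAt ℝ (pdd d j (φf i)) x :=
        ((hφij_cd j i).differentiable (by simp)) x
      rw [pdd_add j x ((d1.fun_sub d2).fun_add d3) d4, pdd_add j x (d1.fun_sub d2) d3,
        pdd_sub j x d1 d2, pdd_const_mul _ j x (((hA_cd j).differentiable (by simp)) x)]
      by_cases h : i = j
      · simp only [if_pos h]
        rw [pdd_const_mul _ j x ((hS_cd.differentiable (by simp)) x)]
      · simp only [if_neg h]
        rw [show (fun y => (1 : ℝ) / ((d : ℝ) - 1) * (0:ℝ)) = fun _ => (1 : ℝ) / ((d : ℝ) - 1) * (0:ℝ) from rfl]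
        rw [pdd_const_mul _ j x (differentiableAt_const 0), pdd_const]
    rw [Finset.sum_congr rfl (fun j _ => step1 j)]
    rw [Finset.sum_add_distrib, Finset.sum_add_distrib, Finset.sum_sub_distrib,
      ← Finset.mul_sum, ← Finset.mul_sum]
    -- T = ∑_k ∂_i∂_k φ_k
    set T : ℝ := ∑ k, pdd d i (pdd d k (φf k)) x with hT
    -- term 1
    have t1 : ∑ j, pdd d j (A i j) x = T := by
      have : ∀ j, pdd d j (A i j) x = ∑ k, pdd d i (pdd d j (pdd d j (pdd d k (χf k)))) x := by
        intro j
        rw [show pdd d j (A i j) x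
            = pdd d j (fun y => ∑ k, pdd d i (pdd d j (pdd d k (χf k))) y) x from rfl,
          pdd_sum j x (fun k => ((pdd_contDiff (pdd_contDiff (pdd_contDiff (hχk k) k) j) i).differentiable (by simp)) x)]
        refine Finset.sum_congr rfl (fun k _ => ?_)
        exact pdd_swap (pdd_contDiff (pdd_contDiff (hχk k) k) j) j i x
      rw [Finset.sum_congr rfl (fun j _ => this j), Finset.sum_comm]
      refine Finset.sum_congr rfl (fun k _ => ?_)
      have hlapform : ∑ j, pdd d i (pdd d j (pdd d j (pdd d k (χf k)))) x
          = pdd d i (fun y => ∑ j, pdd d j (pdd d j (pdd d k (χf k))) y) x := by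
        rw [pdd_sum i x (fun j => ((pdd_contDiff (pdd_contDiff (pdd_contDiff (hχk k) k) j) j).differentiable (by simp)) x)]
      rw [hlapform]
      have : (fun y => ∑ j, pdd d j (pdd d j (pdd d k (χf k))) y)
          = lap d (pdd d k (χf k)) := by
        funext y; rfl
      rw [this]
      have : lap d (pdd d k (χf k)) = pdd d k (φf k) := by
        funext y
        rw [lap_pdd (hχk k) k y]
        congr 1
        exact funext (fun z => hΔχ z k)
      rw [this]
    -- term 2
    have t2 : ∑ j, (if i = j then pdd d j S x else 0) = T := by
      rw [Finset.sum_ite_eq (Finset.univ : Finset (Fin d)) i (fun j => pdd d j S x)]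
      simp only [Finset.mem_univ, if_pos]
      rw [show pdd d i S x = pdd d i (fun y => ∑ k, pdd d k (φf k) y) x from rfl,
        pdd_sum i x (fun k => ((pdd_contDiff (hφk k) k).differentiable (by simp)) x)]
    -- term 3
    have t3 : ∑ j, pdd d j (pdd d i (φf j)) x = T := by
      refine Finset.sum_congr rfl (fun j _ => ?_)
      exact pdd_swap (hφk j) j i x
    -- term 4
    have t4 : ∑ j, pdd d j (pdd d j (φf i)) x = v x i := by
      have : ∑ j, pdd d j (pdd d j (φf i)) x = lap d (φf i) x := rfl
      rw [this]
      exact hΔφ x i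
    rw [t1, t2, t3, t4]
    field_simp
    ring
end
end
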